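/- arXiv:math/0310130 — 2 statements merged into one kernel-verified Lean document; each statement's English description precedes it below -/
import Mathlib

section
/- Let W be an m×n integer matrix giving a positive grading, i.e. the rows of W are ℤ-linearly independent, no column of W is zero, and the first non-zero entry of each column of W is positive. Then there exists a term ordering (monomial order) σ on ℕ^n which is compatible with deg_W: for all α, β ∈ ℕ^n, if W·α <_Lex W·β then α <_σ β. -/
open MvPolynomial

/-- The `W`-degree of an exponent vector `α ∈ ℕ^n`: `W·α = ∑ⱼ αⱼ w⁽ʲ⁾ ∈ ℤ^m`. -/
def wdeg {m n : ℕ} (W : Matrix (Fin m) (Fin n) ℤ) (α : Fin n →₀ ℕ) : Fin m → ℤ :=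
  fun i => ∑ j, (α j : ℤ) * W i j

/-- A polynomial is `W`-homogeneous of degree `d ∈ ℤ^m` if every monomial in its support
has `W`-degree `d`. -/
def IsWHomogeneous {K : Type*} [CommSemiring K] {m n : ℕ} (W : Matrix (Fin m) (Fin n) ℤ)
    (p : MvPolynomial (Fin n) K) (d : Fin m → ℤ) : Prop :=
  ∀ α ∈ p.support, wdeg W α = d

/-- The grading given by `W` is positive: the rows of `W` are `ℤ`-linearly independent,
no column of `W` is zero, and the first non-zero entry of each column of `W` is positive. -/
def PositiveGrading {m n : ℕ} (W : Matrix (Fin m) (Fin n) ℤ) : Prop :=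
  LinearIndependent ℤ (fun i : Fin m => (fun j => W i j : Fin n → ℤ)) ∧
  (∀ j : Fin n, ∃ i : Fin m, W i j ≠ 0) ∧
  (∀ j : Fin n, ∃ i : Fin m, 0 < W i j ∧ ∀ i' < i, W i' j = 0)

/-!
Order monomials by their `W`-degree in `Lex`, breaking ties by the lexicographic order on
exponents. The key `α ↦ (W·α, α)` is additive and injective, and it is monotone for the
componentwise order because every column of `W` is lex-positive, so `W`-degrees are
lex-nonnegative. By Dickson's lemma, `ℕ^n` has no infinite antichains, so the pulled-back
linear order is a well-order, i.e. a monomial order.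
-/

open Finsupp Function

instance ULift.isOrderedAddMonoid {α : Type*} [AddCommMonoid α] [Preorder α]
    [IsOrderedAddMonoid α] : IsOrderedAddMonoid (ULift α) where
  add_le_add_left a b h c := IsOrderedAddMonoid.add_le_add_left (α := α) a.down b.down h c.down

theorem AddMonoidHom.monotone_of_map_nonneg {M N : Type*} [AddCommMonoid M] [Preorder M]
    [ExistsAddOfLE M] [AddCommMonoid N] [Preorder N] [IsOrderedAddMonoid N] (f : M →+ N)
    (hf : ∀ x, 0 ≤ f x) : Monotone f := by
  intro a b hab
  obtain ⟨c, rfl⟩ := exists_add_of_le hab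
  simpa using le_add_of_nonneg_right (hf c)

theorem Monotone.wellFoundedLT_range {α β : Type*} [Preorder α] [WellQuasiOrderedLE α]
    [LinearOrder β] {f : α → β} (hf : Monotone f) : WellFoundedLT (Set.range f) := by
  have := ((Set.isPWO_of_wellQuasiOrderedLE Set.univ).image_of_monotone hf).isWF
  rw [Set.image_univ] at this
  exact ⟨this⟩

namespace MonomialOrder

universe u v w

variable {σ : Type w} {Γ : Type v} [Finite σ] [AddCommMonoid Γ] [LinearOrder Γ]
  [IsOrderedAddMonoid Γ]

noncomputable def ofInjective (f : (σ →₀ ℕ) →+ Γ) (hinj : Injective f) (hmono : Monotone f) :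
    MonomialOrder.{w, max u v} σ where
  syn := ULift.{u} (AddMonoidHom.mrange f)
  toSyn := (AddEquiv.ofLeftInverse' f (leftInverse_invFun hinj)).trans AddEquiv.ulift.symm
  toSyn_monotone _ _ h := hmono h
  wellFoundedLT_syn :=
    have : WellFoundedLT (AddMonoidHom.mrange f) := hmono.wellFoundedLT_range
    inferInstance

theorem ofInjective_toSyn_lt_iff (f : (σ →₀ ℕ) →+ Γ) (hinj : Injective f) (hmono : Monotone f)
    {a b : σ →₀ ℕ} :
    (ofInjective f hinj hmono).toSyn a < (ofInjective f hinj hmono).toSyn b ↔ f a < f b :=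
  .rfl

end MonomialOrder

section WDegree

variable {m n : ℕ}

theorem wdeg_zero (W : Matrix (Fin m) (Fin n) ℤ) : wdeg W 0 = 0 := by
  funext i; simp [wdeg]

theorem wdeg_add (W : Matrix (Fin m) (Fin n) ℤ) (α β : Fin n →₀ ℕ) :
    wdeg W (α + β) = wdeg W α + wdeg W β := by
  funext i; simp [wdeg, add_mul, Finset.sum_add_distrib]

theorem toLex_wdeg_nonneg {W : Matrix (Fin m) (Fin n) ℤ}
    (hW : ∀ j, ∃ i, 0 < W i j ∧ ∀ i' < i, W i' j = 0) (α : Fin n →₀ ℕ) :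
    0 ≤ toLex (wdeg W α) := by
  have hcol : ∀ j, 0 ≤ toLex (fun i => W i j) := fun j => by
    obtain ⟨i, hpos, hzero⟩ := hW j
    exact le_of_lt ⟨i, fun i' hi' => (hzero i' hi').symm, hpos⟩
  have hsum : wdeg W α = ∑ j, α j • fun i => W i j := by
    funext i; simp [wdeg, Finset.sum_apply]
  rw [hsum]
  show 0 ≤ ∑ j, α j • toLex (fun i => W i j)
  exact Finset.sum_nonneg fun j _ => nsmul_nonneg (hcol j) _

noncomputable def wdegLexKey (W : Matrix (Fin m) (Fin n) ℤ) :
    (Fin n →₀ ℕ) →+ Lex (Fin m → ℤ) ×ₗ Lex (Fin n →₀ ℕ) where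
  toFun α := toLex (toLex (wdeg W α), toLex α)
  map_zero' := by rw [wdeg_zero]; rfl
  map_add' α β := by rw [wdeg_add]; rfl

theorem wdegLexKey_injective (W : Matrix (Fin m) (Fin n) ℤ) : Injective (wdegLexKey W) :=
  fun _ _ h => congrArg (fun x : Lex (Fin m → ℤ) ×ₗ Lex (Fin n →₀ ℕ) => ofLex (ofLex x).2) h

theorem wdegLexKey_monotone {W : Matrix (Fin m) (Fin n) ℤ}
    (hW : ∀ j, ∃ i, 0 < W i j ∧ ∀ i' < i, W i' j = 0) : Monotone (wdegLexKey W) :=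
  (wdegLexKey W).monotone_of_map_nonneg fun α =>
    Prod.Lex.toLex_mono (show ((0 : Lex (Fin m → ℤ)), (0 : Lex (Fin n →₀ ℕ))) ≤ _ from
      ⟨toLex_wdeg_nonneg hW α, toLex_monotone zero_le⟩)

end WDegree

/-- If the grading given by `W` is positive, then there exists a term ordering (monomial
order) `σ` on `ℕ^n` which is compatible with `deg_W`: whenever `W·α <_Lex W·β` one has
`α <_σ β`. -/
theorem stmt_5 {m n : ℕ} (W : Matrix (Fin m) (Fin n) ℤ) (hW : PositiveGrading W) :
    ∃ σ : MonomialOrder (Fin n), ∀ α β : Fin n →₀ ℕ,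
      toLex (wdeg W α) < toLex (wdeg W β) → σ.toSyn α < σ.toSyn β := by
  refine ⟨.ofInjective _ (wdegLexKey_injective W) (wdegLexKey_monotone hW.2.2), fun α β h => ?_⟩
  rw [MonomialOrder.ofInjective_toSyn_lt_iff]
  exact Prod.Lex.lt_iff.2 (Or.inl h)
end

section
/- Extending a truncated Gröbner basis by one element: let the grading given by W be positive, let σ be a term ordering on ℕ^n, let D ∈ ℤ^m, and let g_1,…,g_s ∈ P be nonzero W-homogeneous polynomials, g_k of W-degree d_k, generating an ideal I and forming a D-truncated σ-Gröbner basis in the sense that for every nonzero W-homogeneous v ∈ I with deg_W(v) ≤_Lex D there is k with d_k ≤_Lex D and deg_σ(g_k) ≤ deg_σ(v) componentwise. Let g_{s+1} ∈ P be a nonzero W-homogeneous polynomial of W-degree exactly D such that no deg_σ(g_k) (1 ≤ k ≤ s) divides deg_σ(g_{s+1}) componentwise. Then g_1,…,g_{s+1} form a D-truncated σ-Gröbner basis of I + (g_{s+1}): for every nonzero W-homogeneous v ∈ I + (g_{s+1}) with deg_W(v) ≤_Lex D there is k ∈ {1,…,s+1} whose W-degree is ≤_Lex D and with deg_σ(g_k)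 ≤ deg_σ(v) componentwise. -/
/-! Write `v = a + q * h` with `a ∈ I`. Since `v` is `W`-homogeneous of degree `e`, it equals its
component of degree `e`, which is `a_e + q_{e-D} * h`: here `a_e ∈ I` because `I` is generated by
homogeneous elements, and `q_{e-D}` is a constant `c` because `e - D ≤ 0` and a positive grading
makes every non-constant monomial of positive degree. So `v = a_e + c • h`. If `a_e` and `c` are
both nonzero, the truncated Gröbner property gives `g_k` with `deg_σ g_k ≤ deg_σ a_e`, so
`deg_σ a_e ≠ deg_σ h` (no `deg_σ g_k` divides `deg_σ h`) and the leading exponent of `v` is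
that of `a_e` or that of `h`. -/

open MvPolynomial

/-- The `σ`-degree (exponent of the `σ`-leading term) of a polynomial: the `σ`-largest
exponent vector in its support. -/
noncomputable def mdeg {K : Type*} [CommSemiring K] {n : ℕ} (σ : MonomialOrder (Fin n))
    (f : MvPolynomial (Fin n) K) : Fin n →₀ ℕ :=
  σ.toSyn.symm (f.support.sup fun α => σ.toSyn α)

section WeightedHomogeneous

variable {σ M K ι : Type*}

theorem Finsupp.weight_pos_of_ne_zero [AddCommMonoid M] [PartialOrder M] [IsOrderedAddMonoid M]
    {w : σ → M} (hw : ∀ i, 0 < w i) {f : σ →₀ ℕ} (hf : f ≠ 0) : 0 < Finsupp.weight w f := by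
  obtain ⟨i, hi⟩ := Finsupp.ne_iff.mp hf
  exact (hw i).trans_le (Finsupp.le_weight_of_ne_zero (fun j => (hw j).le) hi)

theorem MvPolynomial.IsWeightedHomogeneous.eq_C_of_nonpos [CommSemiring K]
    [AddCommMonoid M] [PartialOrder M] [IsOrderedAddMonoid M] {w : σ → M} (hw : ∀ i, 0 < w i)
    {p : MvPolynomial σ K} {d : M} (hp : p.IsWeightedHomogeneous w d) (hd : d ≤ 0) :
    p = C (coeff 0 p) := by
  refine totalDegree_eq_zero_iff_eq_C.mp ((totalDegree_eq_zero_iff σ p).mpr fun α hα => ?_)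
  have hα0 : α = 0 := by
    by_contra hne
    exact (Finsupp.weight_pos_of_ne_zero hw hne).not_ge (hp (mem_support_iff.mp hα) ▸ hd)
  simp [hα0]

theorem MvPolynomial.weightedHomogeneousComponent_add_mul_of_isWeightedHomogeneous [CommSemiring K]
    [AddCancelCommMonoid M] {w : σ → M} {h : MvPolynomial σ K} {D : M}
    (hh : h.IsWeightedHomogeneous w D) (q : MvPolynomial σ K) (e : M) :
    weightedHomogeneousComponent w (e + D) (q * h) = weightedHomogeneousComponent w e q * h := by
  classical
  let := weightedGradedAlgebra K w
  simp only [← weightedDecomposition.decompose'_apply K w]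
  exact DirectSum.coe_decompose_mul_add_of_right_mem (weightedHomogeneousSubmodule K w) hh

theorem MvPolynomial.weightedHomogeneousComponent_mem_span [CommSemiring K] [AddCommMonoid M]
    {w : σ → M} {g : ι → MvPolynomial σ K} {d : ι → M}
    (hg : ∀ k, (g k).IsWeightedHomogeneous w (d k)) {a : MvPolynomial σ K}
    (ha : a ∈ Ideal.span (Set.range g)) (e : M) :
    weightedHomogeneousComponent w e a ∈ Ideal.span (Set.range g) := by
  classical
  let := weightedGradedAlgebra K w
  refine weightedHomogeneousComponent_mem_of_mem K w (Ideal.homogeneous_span _ _ ?_) ha e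
  rintro _ ⟨k, rfl⟩
  exact ⟨d k, hg k⟩

theorem MvPolynomial.exists_eq_add_smul_of_mem_span_sup_span_singleton [CommSemiring K]
    [AddCommGroup M] [PartialOrder M] [IsOrderedAddMonoid M] {w : σ → M}
    (hw : ∀ i, 0 < w i) {g : ι → MvPolynomial σ K} {d : ι → M}
    (hg : ∀ k, (g k).IsWeightedHomogeneous w (d k)) {h : MvPolynomial σ K} {D : M}
    (hh : h.IsWeightedHomogeneous w D) {v : MvPolynomial σ K}
    (hv : v ∈ Ideal.span (Set.range g) ⊔ Ideal.span {h}) {e : M}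
    (hve : v.IsWeightedHomogeneous w e) (heD : e ≤ D) :
    ∃ a ∈ Ideal.span (Set.range g), a.IsWeightedHomogeneous w e ∧ ∃ c : K, v = a + c • h := by
  obtain ⟨a, ha, b, hb, rfl⟩ := Submodule.mem_sup.mp hv
  obtain ⟨q, rfl⟩ := Ideal.mem_span_singleton'.mp hb
  set q' := weightedHomogeneousComponent w (e - D) q
  have hq'C : q' = C (coeff 0 q') :=
    (weightedHomogeneousComponent_isWeightedHomogeneous _ _).eq_C_of_nonpos hw (sub_nonpos.mpr heD)
  have hqh : weightedHomogeneousComponent w e (q * h) = q' * h := by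
    simpa using weightedHomogeneousComponent_add_mul_of_isWeightedHomogeneous hh q (e - D)
  refine ⟨weightedHomogeneousComponent w e a, weightedHomogeneousComponent_mem_span hg ha e,
    weightedHomogeneousComponent_isWeightedHomogeneous _ _, coeff 0 q', ?_⟩
  calc a + q * h = weightedHomogeneousComponent w e (a + q * h) :=
        hve.weightedHomogeneousComponent_same.symm
    _ = weightedHomogeneousComponent w e a + coeff 0 q' • h := by
        rw [map_add, hqh, smul_eq_C_mul, ← hq'C]

end WeightedHomogeneous

theorem MonomialOrder.degree_add_eq_or_of_ne {σ R : Type*} [CommSemiring R] (m : MonomialOrder σ)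
    {f g : MvPolynomial σ R} (h : m.degree f ≠ m.degree g) :
    m.degree (f + g) = m.degree f ∨ m.degree (f + g) = m.degree g := by
  rcases lt_trichotomy (m.toSyn (m.degree f)) (m.toSyn (m.degree g)) with hlt | heq | hgt
  · exact Or.inr (m.degree_add_eq_right_of_lt hlt)
  · exact absurd (m.toSyn.injective heq) h
  · exact Or.inl (m.degree_add_of_lt hgt)

theorem mdeg_eq_degree {K : Type*} [CommSemiring K] {n : ℕ} (σ : MonomialOrder (Fin n))
    (f : MvPolynomial (Fin n) K) : mdeg σ f = σ.degree f :=
  rfl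

section Grading

variable {m n : ℕ} (W : Matrix (Fin m) (Fin n) ℤ)

def lexColumn (j : Fin n) : Lex (Fin m → ℤ) :=
  toLex fun i => W i j

theorem toLex_wdeg (α : Fin n →₀ ℕ) : toLex (wdeg W α) = Finsupp.weight (lexColumn W) α := by
  rw [Finsupp.weight_eq_sum]
  change wdeg W α = ∑ j, α j • fun i => W i j
  funext i
  simp [wdeg, Finset.sum_apply, mul_comm]

theorem isWHomogeneous_iff {K : Type*} [CommSemiring K] {p : MvPolynomial (Fin n) K}
    {e : Fin m → ℤ} :
    IsWHomogeneous W p e ↔ p.IsWeightedHomogeneous (lexColumn W) (toLex e) := by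
  simp only [IsWHomogeneous, IsWeightedHomogeneous, mem_support_iff, ← toLex_wdeg,
    toLex_inj]

variable {W}

theorem PositiveGrading.lexColumn_pos (hW : PositiveGrading W) (j : Fin n) :
    0 < lexColumn W j := by
  obtain ⟨i, hpos, hzero⟩ := hW.2.2 j
  exact ⟨i, fun i' hi' => (hzero i' hi').symm, hpos⟩

end Grading

theorem stmt_9_general {K : Type*} [Field K] {m n s : ℕ} (W : Matrix (Fin m) (Fin n) ℤ)
    (hW : PositiveGrading W) (σ : MonomialOrder (Fin n))
    (g : Fin s → MvPolynomial (Fin n) K)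
    (d : Fin s → Fin m → ℤ) (hgh : ∀ k, IsWHomogeneous W (g k) (d k))
    (D : Fin m → ℤ)
    (htrunc : ∀ v ∈ Ideal.span (Set.range g), v ≠ 0 →
      ∀ e : Fin m → ℤ, IsWHomogeneous W v e → toLex e ≤ toLex D →
      ∃ k, toLex (d k) ≤ toLex D ∧ mdeg σ (g k) ≤ mdeg σ v)
    (h : MvPolynomial (Fin n) K) (hhhom : IsWHomogeneous W h D)
    (hnotdiv : ∀ k, ¬ mdeg σ (g k) ≤ mdeg σ h) :
    ∀ v ∈ Ideal.span (Set.range g) ⊔ Ideal.span {h}, v ≠ 0 →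
      ∀ e : Fin m → ℤ, IsWHomogeneous W v e → toLex e ≤ toLex D →
      (∃ k, toLex (d k) ≤ toLex D ∧ mdeg σ (g k) ≤ mdeg σ v) ∨
        mdeg σ h ≤ mdeg σ v := by
  intro v hv hv0 e hve heD
  obtain ⟨a, haI, hae, c, rfl⟩ := exists_eq_add_smul_of_mem_span_sup_span_singleton
    hW.lexColumn_pos (fun k => (isWHomogeneous_iff W).mp (hgh k))
    ((isWHomogeneous_iff W).mp hhhom) hv ((isWHomogeneous_iff W).mp hve) heD
  have htrunc_a := htrunc a haI
  simp only [mdeg_eq_degree] at htrunc_a hnotdiv ⊢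
  rcases eq_or_ne c 0 with rfl | hc
  · rw [zero_smul, add_zero] at hv0 ⊢
    exact Or.inl (htrunc_a hv0 e ((isWHomogeneous_iff W).mpr hae) heD)
  have hdeg_ch : σ.degree (c • h) = σ.degree h := σ.degree_smul_of_isRegular hc.isUnit.isRegular
  rcases eq_or_ne a 0 with rfl | ha0
  · exact Or.inr (by rw [zero_add, hdeg_ch])
  obtain ⟨k, hkD, hk⟩ := htrunc_a ha0 e ((isWHomogeneous_iff W).mpr hae) heD
  have hne : σ.degree a ≠ σ.degree (c • h) := fun heq => hnotdiv k (hdeg_ch ▸ heq ▸ hk)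
  rcases σ.degree_add_eq_or_of_ne hne with hdeg | hdeg
  · exact Or.inl ⟨k, hkD, hdeg ▸ hk⟩
  · exact Or.inr (by rw [hdeg, hdeg_ch])

/-- Extending a truncated Gröbner basis by one element: if `g_1,…,g_s` form a `D`-truncated
`σ`-Gröbner basis of `I` and `h` is a nonzero `W`-homogeneous polynomial of `W`-degree
exactly `D` whose leading term is not divisible by any leading term of the `g_k`, then
`g_1,…,g_s,h` form a `D`-truncated `σ`-Gröbner basis of `I + (h)`. -/
theorem stmt_9 {K : Type*} [Field K] {m n s : ℕ} (W : Matrix (Fin m) (Fin n) ℤ)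
    (hW : PositiveGrading W) (σ : MonomialOrder (Fin n))
    (g : Fin s → MvPolynomial (Fin n) K) (hg0 : ∀ k, g k ≠ 0)
    (d : Fin s → Fin m → ℤ) (hgh : ∀ k, IsWHomogeneous W (g k) (d k))
    (D : Fin m → ℤ)
    (htrunc : ∀ v ∈ Ideal.span (Set.range g), v ≠ 0 →
      ∀ e : Fin m → ℤ, IsWHomogeneous W v e → toLex e ≤ toLex D →
      ∃ k, toLex (d k) ≤ toLex D ∧ mdeg σ (g k) ≤ mdeg σ v)
    (h : MvPolynomial (Fin n) K) (hh0 : h ≠ 0) (hhhom : IsWHomogeneous W h D)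
    (hnotdiv : ∀ k, ¬ mdeg σ (g k) ≤ mdeg σ h) :
    ∀ v ∈ Ideal.span (Set.range g) ⊔ Ideal.span {h}, v ≠ 0 →
      ∀ e : Fin m → ℤ, IsWHomogeneous W v e → toLex e ≤ toLex D →
      (∃ k, toLex (d k) ≤ toLex D ∧ mdeg σ (g k) ≤ mdeg σ v) ∨
        mdeg σ h ≤ mdeg σ v :=
  stmt_9_general W hW σ g d hgh D htrunc h hhhom hnotdiv
end
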